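/- arXiv:math-ph/0509054 — 2 statements merged into one kernel-verified Lean document; each statement's English description precedes it below -/
import Mathlib

section
/- Given a Chevalley–Eilenberg 1-cocycle α ∈ Z¹_CE(𝔤, Z(A)_{anti-Hermitian}), the maps a⁽ᵏ⁾ : T^k_ℂ(𝔤) → A defined inductively by a⁽⁰⁾ = 1_A and a⁽ᵏ⁾(ξ ⊗ Y) = α(ξ)·a⁽ᵏ⁻¹⁾(Y) + ξ ▷ a⁽ᵏ⁻¹⁾(Y) descend to a well-defined map a on the universal enveloping algebra U_ℂ(𝔤) (i.e., a vanishes on the two-sided ideal generated by ξ⊗η − η⊗ξ − [ξ,η]), and a belongs to U(U_ℂ(𝔤), A) with a|_𝔤 = α. Hence restriction a ↦ a|_𝔤 is a group isomorphism U(U_ℂ(𝔤), A) ≅ Z¹_CE(𝔤, Z(A)_{anti-Hermitian}). -/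
open TensorProduct

noncomputable section

/-- The data of a Hopf `*`-algebra structure (over `ℂ`) on a `*`-algebra `H`,
together with a chosen Sweedler representation `rep` of the comultiplication:
`Δ(g) = Σᵢ g₍₁₎ᵢ ⊗ g₍₂₎ᵢ` where the pairs `(g₍₁₎ᵢ, g₍₂₎ᵢ)` are listed by `rep g`. -/
structure HopfStarData (H : Type) [Ring H] [Algebra ℂ H] [StarRing H] : Type where
  comul : H →ₗ[ℂ] H ⊗[ℂ] H
  counit : H →ₗ[ℂ] ℂ
  antipode : H →ₗ[ℂ] H
  rep : H → List (H × H)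
  rep_spec : ∀ g, comul g = ((rep g).map fun p => p.1 ⊗ₜ[ℂ] p.2).sum
  comul_one : comul 1 = 1
  comul_mul : ∀ g h, comul (g * h) = comul g * comul h
  counit_one : counit 1 = 1
  counit_mul : ∀ g h, counit (g * h) = counit g * counit h
  coassoc : (TensorProduct.assoc ℂ H H H).toLinearMap ∘ₗ
      (TensorProduct.map comul LinearMap.id) ∘ₗ comul
      = (TensorProduct.map LinearMap.id comul) ∘ₗ comul
  counit_comul_left : ∀ g, ((rep g).map fun p => counit p.1 • p.2).sum = g
  counit_comul_right : ∀ g, ((rep g).map fun p => counit p.2 • p.1).sum = g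
  antipode_left : ∀ g, ((rep g).map fun p => antipode p.1 * p.2).sum = counit g • (1 : H)
  antipode_right : ∀ g, ((rep g).map fun p => p.1 * antipode p.2).sum = counit g • (1 : H)
  comul_star : ∀ g, comul (star g) = ((rep g).map fun p => star p.1 ⊗ₜ[ℂ] star p.2).sum
  counit_star : ∀ g, counit (star g) = starRingEnd ℂ (counit g)
  antipode_star : ∀ g, antipode (star (antipode (star g))) = g

variable {H A : Type} [Ring H] [Algebra ℂ H] [StarRing H]

/-- `act` is a Hopf-algebraic `*`-action of `(H, D)` on the `*`-algebra `A`: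
`g ▷ (xy) = (g₍₁₎ ▷ x)(g₍₂₎ ▷ y)`, `g ▷ 1 = ε(g)1` and `(g ▷ x)* = S(g)* ▷ x*`. -/
def IsStarAction [Ring A] [Algebra ℂ A] [StarRing A]
    (D : HopfStarData H) (act : H →ₗ[ℂ] A →ₗ[ℂ] A) : Prop :=
  (∀ g h x, act (g * h) x = act g (act h x)) ∧
  (∀ x, act 1 x = x) ∧
  (∀ g x y, act g (x * y) = ((D.rep g).map fun p => act p.1 x * act p.2 y).sum) ∧
  (∀ g, act g 1 = D.counit g • 1) ∧
  (∀ g x, star (act g x) = act (star (D.antipode g)) (star x))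

/-- The convolution product on `Hom(H, A)`: `(a * b)(g) = a(g₍₁₎) b(g₍₂₎)`. -/
def conv [Ring A] [Algebra ℂ A] (D : HopfStarData H) (a b : H →ₗ[ℂ] A) : H →ₗ[ℂ] A :=
  LinearMap.mul' ℂ A ∘ₗ TensorProduct.map a b ∘ₗ D.comul

/-- The convolution unit `e(g) = ε(g) 1`. -/
def convUnit [Ring A] [Algebra ℂ A] (D : HopfStarData H) : H →ₗ[ℂ] A :=
  Algebra.linearMap ℂ A ∘ₗ D.counit

/-- Membership in `U(H, A)`: normalization, the cocycle condition, centrality and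
unitarity, cf. (13)–(16) in the paper. -/
def IsUElem [Ring A] [Algebra ℂ A] [StarRing A]
    (D : HopfStarData H) (act : H →ₗ[ℂ] A →ₗ[ℂ] A) (a : H →ₗ[ℂ] A) : Prop :=
  a 1 = 1 ∧
  (∀ g h, a (g * h) = ((D.rep g).map fun p => a p.1 * act p.2 (a h)).sum) ∧
  (∀ g b, ((D.rep g).map fun p => act p.1 b * a p.2).sum
        = ((D.rep g).map fun p => a p.1 * act p.2 b).sum) ∧
  (∀ g, ((D.rep g).map fun p => a p.1 * star (a (D.antipode (star p.2)))).sum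
      = D.counit g • 1)

/-- `c` is a central element of `A`. -/
def IsCentral [Ring A] (c : A) : Prop := ∀ x, c * x = x * c

/-- `c` is a unitary central element of `A`. -/
def IsUnitaryCentral [Ring A] [StarRing A] (c : A) : Prop :=
  IsCentral c ∧ star c * c = 1 ∧ c * star c = 1

/-- For a unitary central element `c`, the map `ĉ(g) = c · (g ▷ c⁻¹) = c · (g ▷ c*)`. -/
def chat [Ring A] [Algebra ℂ A] [StarRing A]
    (act : H →ₗ[ℂ] A →ₗ[ℂ] A) (c : A) : H →ₗ[ℂ] A :=
  LinearMap.mulLeft ℂ c ∘ₗ act.flip (star c)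

variable {𝔤 : Type} [LieRing 𝔤] [LieAlgebra ℝ 𝔤]

/-!
A cocycle `α` determines, for each `ξ`, the operator `x ↦ α(ξ) x + ξ ▷ x` on `A`; the cocycle
identity says exactly that these operators form a representation of `𝔤`, so the universal
property of `U_ℂ(𝔤)` gives an algebra map `T : U_ℂ(𝔤) → End A`, and `a(g) = T(g)(1)` satisfies the
recursion `a(ξ g) = α(ξ) a(g) + ξ ▷ a(g)`. Since `U_ℂ(𝔤)` is generated by the primitive elements,
two linear maps obeying the same recursion along the generators and agreeing at `1` coincide. Each
axiom of `U(U_ℂ(𝔤), A)` is such an identity between Sweedler sums, and the Leibniz rule for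
primitives shows that both sides obey a common recursion. Restriction is injective for the same
reason, and it is additive because `Δξ = ξ ⊗ 1 + 1 ⊗ ξ`.
-/

theorem LinearMap.eq_of_map_generator_mul {R S M σ : Type*} [CommSemiring R] [Semiring S]
    [Algebra R S] [AddCommMonoid M] [Module R M] {ι : σ → S}
    (hgen : Algebra.adjoin R (Set.range ι) = ⊤) (L : σ → M →ₗ[R] M) {F G : S →ₗ[R] M}
    (h1 : F 1 = G 1) (hF : ∀ ξ h, F (ι ξ * h) = L ξ (F h))
    (hG : ∀ ξ h, G (ι ξ * h) = L ξ (G h)) : F = G := by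
  suffices key : ∀ g h, F h = G h → F (g * h) = G (g * h) by
    ext g
    simpa using key g 1 h1
  intro g
  induction (hgen ▸ Algebra.mem_top : g ∈ Algebra.adjoin R (Set.range ι)) using
    Algebra.adjoin_induction with
  | mem x hx =>
    obtain ⟨ξ, rfl⟩ := hx
    intro h hh
    rw [hF, hG, hh]
  | algebraMap r =>
    intro h hh
    rw [← Algebra.smul_def, map_smul, map_smul, hh]
  | add x y _ _ ihx ihy =>
    intro h hh
    rw [add_mul, map_add, map_add, ihx h hh, ihy h hh]
  | mul x y _ _ ihx ihy =>
    intro h hh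
    rw [mul_assoc]
    exact ihx _ (ihy h hh)

theorem commute_star_smul_one {R B : Type*} [CommSemiring R] [Semiring B] [StarRing B]
    [Algebra R B] (r : R) (x : B) : Commute (star (r • (1 : B))) x := by
  rw [Commute, SemiconjBy, ← star_star x, ← star_mul, ← star_mul, smul_one_mul, mul_smul_one]

theorem StarModule.of_star_smul_one {R B : Type*} [CommSemiring R] [StarRing R] [Semiring B]
    [StarRing B] [Algebra R B] (h : ∀ r : R, star (r • (1 : B)) = star r • (1 : B)) :
    StarModule R B :=
  ⟨fun r x => by rw [← smul_one_mul, star_mul, h, mul_smul_one]⟩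

namespace HopfStarData

variable (D : HopfStarData H)

theorem sum_rep_eq_lift {M : Type} [AddCommGroup M] [Module ℂ M] (f : H →ₗ[ℂ] H →ₗ[ℂ] M)
    (g : H) : ((D.rep g).map fun p => f p.1 p.2).sum = TensorProduct.lift f (D.comul g) := by
  rw [D.rep_spec, map_list_sum, List.map_map]
  rfl

abbrev toHopfAlgebra : HopfAlgebra ℂ H where
  comul := D.comul
  counit := D.counit
  coassoc := D.coassoc
  rTensor_counit_comp_comul := by
    ext g
    simpa [D.rep_spec, map_list_sum, Function.comp_def, TensorProduct.smul_tmul']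
      using congrArg (TensorProduct.mk ℂ ℂ H 1) (D.counit_comul_left g)
  lTensor_counit_comp_comul := by
    ext g
    simpa [D.rep_spec, map_list_sum, Function.comp_def, TensorProduct.smul_tmul,
      TensorProduct.smul_tmul'] using congrArg ((TensorProduct.mk ℂ H ℂ).flip 1)
        (D.counit_comul_right g)
  counit_one := D.counit_one
  mul_compr₂_counit := by ext; exact D.counit_mul _ _
  comul_one := D.comul_one
  mul_compr₂_comul := by ext; exact D.comul_mul _ _
  antipode := D.antipode
  mul_antipode_rTensor_comul := by
    ext g
    simpa [D.rep_spec, map_list_sum, Function.comp_def, Algebra.algebraMap_eq_smul_one]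
      using D.antipode_left g
  mul_antipode_lTensor_comul := by
    ext g
    simpa [D.rep_spec, map_list_sum, Function.comp_def, Algebra.algebraMap_eq_smul_one]
      using D.antipode_right g

theorem antipode_mul (u v : H) : D.antipode (u * v) = D.antipode v * D.antipode u :=
  letI := D.toHopfAlgebra
  HopfAlgebra.antipode_mul_antidistrib (R := ℂ) u v

theorem antipode_one : D.antipode 1 = 1 :=
  letI := D.toHopfAlgebra
  HopfAlgebra.antipode_one (R := ℂ)

theorem lift_comul_mul_of_primitive {M : Type} [AddCommGroup M] [Module ℂ M] {k : H}
    (hk : D.comul k = k ⊗ₜ 1 + 1 ⊗ₜ k) (f : H →ₗ[ℂ] H →ₗ[ℂ] M) (L : M →ₗ[ℂ] M)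
    (hf : ∀ u v, f (k * u) v + f u (k * v) = L (f u v)) (h : H) :
    TensorProduct.lift f (D.comul (k * h)) = L (TensorProduct.lift f (D.comul h)) := by
  rw [D.comul_mul, hk]
  induction D.comul h using TensorProduct.induction_on with
  | zero => simp
  | tmul x y => simp [add_mul, Algebra.TensorProduct.tmul_mul_tmul, hf]
  | add x y hx hy => simp only [mul_add, map_add, hx, hy]

theorem lift_comul_eq_of_recursion {M : Type} [AddCommGroup M] [Module ℂ M] {σ : Type*}
    {ι : σ → H} (hgen : Algebra.adjoin ℂ (Set.range ι) = ⊤)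
    (hprim : ∀ ξ, D.comul (ι ξ) = ι ξ ⊗ₜ[ℂ] 1 + 1 ⊗ₜ[ℂ] ι ξ) (L : σ → M →ₗ[ℂ] M)
    (f : H →ₗ[ℂ] H →ₗ[ℂ] M) (hf : ∀ ξ u v, f (ι ξ * u) v + f u (ι ξ * v) = L ξ (f u v))
    {G : H →ₗ[ℂ] M} (h1 : f 1 1 = G 1) (hG : ∀ ξ h, G (ι ξ * h) = L ξ (G h)) (g : H) :
    TensorProduct.lift f (D.comul g) = G g :=
  LinearMap.congr_fun (LinearMap.eq_of_map_generator_mul hgen L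
    (F := TensorProduct.lift f ∘ₗ D.comul)
    (by simp [D.comul_one, Algebra.TensorProduct.one_def, h1])
    (fun ξ => D.lift_comul_mul_of_primitive (hprim ξ) f (L ξ) (hf ξ)) hG) g

theorem antipode_antipode {σ : Type*} {ι : σ → H} (hgen : Algebra.adjoin ℂ (Set.range ι) = ⊤)
    (hS : ∀ ξ, D.antipode (ι ξ) = - ι ξ) (g : H) : D.antipode (D.antipode g) = g := by
  refine LinearMap.congr_fun (LinearMap.eq_of_map_generator_mul hgen
    (fun ξ => LinearMap.mulLeft ℂ (ι ξ)) (F := D.antipode ∘ₗ D.antipode) (G := .id) ?_ ?_ ?_) g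
  · simp [D.antipode_one]
  · intro ξ h
    simp [D.antipode_mul, hS]
  · intro ξ h
    rfl

theorem antipode_star_smul_one (hSS : ∀ g, D.antipode (D.antipode g) = g) (c : ℂ) :
    D.antipode (star (c • (1 : H))) = star (c • (1 : H)) := by
  have h := congrArg D.antipode (D.antipode_star (c • 1))
  rw [hSS, map_smul, D.antipode_one] at h
  rw [← star_star (D.antipode _), h]

/- `StarRing` alone does not make `star` conjugate-linear. Here it is forced by the Hopf
`*`-structure: apply the map `u ⊗ v ↦ S(u*) v*` (`ℂ`-balanced because every `(r • 1)*` is central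
and fixed by `S`) to `comul_star` at `y = (c • 1)*`. As `y* = c • 1`, the left side is `S(y) = y`,
and the right side is `Σ S(y₍₁₎) y₍₂₎ = ε(y) • 1 = c̄ • 1`. -/
theorem star_smul_one (hS : ∀ c : ℂ, D.antipode (star (c • (1 : H))) = star (c • (1 : H)))
    (c : ℂ) : star (c • (1 : H)) = starRingEnd ℂ c • (1 : H) := by
  let F : H →+ H →+ H :=
    { toFun := fun u => (AddMonoidHom.mulLeft (D.antipode (star u))).comp
        (starAddEquiv : H ≃+ H).toAddMonoidHom
      map_zero' := by ext; simp
      map_add' := by intro x y; ext; simp [add_mul] }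
  have hF : ∀ u v, F u v = D.antipode (star u) * star v := fun u v => rfl
  have hbal : ∀ (r : ℂ) u v, F (r • u) v = F u (r • v) := by
    intro r u v
    simp only [hF, ← smul_one_mul r u, ← smul_one_mul r v, star_mul, D.antipode_mul, hS]
    rw [(commute_star_smul_one r _).eq, mul_assoc, (commute_star_smul_one r _).eq]
  have h := congrArg (TensorProduct.liftAddHom F hbal) (D.comul_star (star (c • 1)))
  rw [star_star, map_smul, D.comul_one, Algebra.TensorProduct.one_def, TensorProduct.smul_tmul',
    TensorProduct.liftAddHom_tmul, map_list_sum, List.map_map] at h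
  simpa [Function.comp_def, hF, hS, D.antipode_left, D.counit_star, D.counit_one] using h

theorem starModule {σ : Type*} {ι : σ → H} (hgen : Algebra.adjoin ℂ (Set.range ι) = ⊤)
    (hS : ∀ ξ, D.antipode (ι ξ) = - ι ξ) : StarModule ℂ H :=
  .of_star_smul_one (D.star_smul_one (D.antipode_star_smul_one (D.antipode_antipode hgen hS)))

end HopfStarData

namespace IsStarAction

variable [Ring A] [Algebra ℂ A] [StarRing A] {D : HopfStarData H} {act : H →ₗ[ℂ] A →ₗ[ℂ] A}

theorem starModule [StarModule ℂ H] (hact : IsStarAction D act) : StarModule ℂ A := by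
  refine .of_star_smul_one fun c => ?_
  have hsmul : ∀ x, act (c • 1) x = c • x := fun x => by simp [hact.2.1]
  rw [← hsmul, hact.2.2.2.2, map_smul, D.antipode_one, star_smul, star_one, map_smul,
    LinearMap.smul_apply, hact.2.1, star_one]

theorem map_mul_of_primitive (hact : IsStarAction D act) {k : H}
    (hk : D.comul k = k ⊗ₜ 1 + 1 ⊗ₜ k) (x y : A) :
    act k (x * y) = act k x * y + x * act k y := by
  have h := (hact.2.2.1 k x y).trans
    (D.sum_rep_eq_lift ((LinearMap.mul ℂ A).compl₁₂ (act.flip x) (act.flip y)) k)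
  simpa [hk, hact.2.1] using h

theorem map_one_of_counit_eq_zero (hact : IsStarAction D act) {k : H} (hk : D.counit k = 0) :
    act k 1 = 0 := by
  rw [hact.2.2.2.1, hk, zero_smul]

end IsStarAction

/-- The recursion `a(ξ g) = α(ξ) a(g) + ξ ▷ a(g)` by which the paper defines `a⁽ᵏ⁾` on tensor
powers. -/
def IsCocycleExtension {R S B σ : Type*} [CommSemiring R] [Semiring S] [Algebra R S]
    [Semiring B] [Algebra R B] (act : S →ₗ[R] B →ₗ[R] B) (ι : σ → S) (α : σ → B)
    (a : S →ₗ[R] B) : Prop :=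
  a 1 = 1 ∧ ∀ ξ h, a (ι ξ * h) = α ξ * a h + act (ι ξ) (a h)

theorem IsCocycleExtension.ext {R S B σ : Type*} [CommSemiring R] [Semiring S] [Algebra R S]
    [Semiring B] [Algebra R B] {act : S →ₗ[R] B →ₗ[R] B} {ι : σ → S} {α : σ → B}
    (hgen : Algebra.adjoin R (Set.range ι) = ⊤) {a b : S →ₗ[R] B}
    (ha : IsCocycleExtension act ι α a) (hb : IsCocycleExtension act ι α b) : a = b :=
  LinearMap.eq_of_map_generator_mul hgen (fun ξ => LinearMap.mulLeft R (α ξ) + act (ι ξ))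
    (ha.1.trans hb.1.symm) ha.2 hb.2

theorem IsUElem.isCocycleExtension [Ring A] [Algebra ℂ A] [StarRing A] {D : HopfStarData H}
    {act : H →ₗ[ℂ] A →ₗ[ℂ] A} {a : H →ₗ[ℂ] A} {σ : Type*} {ι : σ → H}
    (hact : IsStarAction D act) (hprim : ∀ ξ, D.comul (ι ξ) = ι ξ ⊗ₜ[ℂ] 1 + 1 ⊗ₜ[ℂ] ι ξ)
    (ha : IsUElem D act a) : IsCocycleExtension act ι (fun ξ => a (ι ξ)) a := by
  refine ⟨ha.1, fun ξ h => ?_⟩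
  have h2 := (ha.2.1 (ι ξ) h).trans
    (D.sum_rep_eq_lift ((LinearMap.mul ℂ A).compl₁₂ a (act.flip (a h))) (ι ξ))
  simpa [hprim, hact.2.1, ha.1] using h2

theorem exists_isCocycleExtension [Ring A] [Algebra ℂ A] [StarRing A] {D : HopfStarData H}
    {act : H →ₗ[ℂ] A →ₗ[ℂ] A} (hact : IsStarAction D act) {ι : 𝔤 → H}
    (hadd : ∀ ξ η, ι (ξ + η) = ι ξ + ι η) (hsmul : ∀ (r : ℝ) ξ, ι (r • ξ) = (r : ℂ) • ι ξ)
    (hbr : ∀ ξ η, ι ⁅ξ, η⁆ = ι ξ * ι η - ι η * ι ξ)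
    (hprim : ∀ ξ, D.comul (ι ξ) = ι ξ ⊗ₜ[ℂ] 1 + 1 ⊗ₜ[ℂ] ι ξ)
    (huniv : ∀ (B : Type) [Ring B] [Algebra ℂ B] (f : 𝔤 → B),
      (∀ ξ η, f (ξ + η) = f ξ + f η) →
      (∀ (r : ℝ) ξ, f (r • ξ) = (r : ℂ) • f ξ) →
      (∀ ξ η, f ⁅ξ, η⁆ = f ξ * f η - f η * f ξ) →
      ∃! φ : H →ₐ[ℂ] B, ∀ ξ, φ (ι ξ) = f ξ)
    {α : 𝔤 → A} (hαadd : ∀ ξ η, α (ξ + η) = α ξ + α η)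
    (hαsmul : ∀ (r : ℝ) ξ, α (r • ξ) = (r : ℂ) • α ξ) (hαc : ∀ ξ, IsCentral (α ξ))
    (hαbr : ∀ ξ η, α ⁅ξ, η⁆ = act (ι ξ) (α η) - act (ι η) (α ξ)) :
    ∃ a, IsCocycleExtension act ι α a := by
  let f : 𝔤 → Module.End ℂ A := fun ξ => LinearMap.mulLeft ℂ (α ξ) + act (ι ξ)
  obtain ⟨T, hT, -⟩ := huniv (Module.End ℂ A) f
    (fun ξ η => by
      ext x
      simp only [f, hαadd, hadd, map_add, LinearMap.add_apply, LinearMap.mulLeft_apply, add_mul]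
      abel)
    (fun r ξ => by ext x; simp [f, hαsmul, hsmul])
    (fun ξ η => by
      ext x
      have hcomm : α ξ * (α η * x) = α η * (α ξ * x) := by
        rw [← mul_assoc, hαc ξ, mul_assoc]
      simp only [f, hαbr, hbr, map_sub, LinearMap.sub_apply, Module.End.mul_apply,
        LinearMap.add_apply, LinearMap.mulLeft_apply, hact.1,
        hact.map_mul_of_primitive (hprim _), sub_mul, mul_add, hcomm]
      abel)
  exact ⟨LinearMap.applyₗ 1 ∘ₗ T.toLinearMap, by simp, fun ξ h => by simp [hT, f]⟩

namespace IsCocycleExtension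

variable [Ring A] [Algebra ℂ A] [StarRing A] {D : HopfStarData H} {act : H →ₗ[ℂ] A →ₗ[ℂ] A}
  {σ : Type*} {ι : σ → H} {α : σ → A} {a : H →ₗ[ℂ] A}

theorem apply_generator (hact : IsStarAction D act) (hcounit : ∀ ξ, D.counit (ι ξ) = 0)
    (ha : IsCocycleExtension act ι α a) (ξ : σ) : a (ι ξ) = α ξ := by
  simpa [ha.1, hact.map_one_of_counit_eq_zero (hcounit ξ)] using ha.2 ξ 1

theorem map_mul (hact : IsStarAction D act) (hgen : Algebra.adjoin ℂ (Set.range ι) = ⊤)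
    (hprim : ∀ ξ, D.comul (ι ξ) = ι ξ ⊗ₜ[ℂ] 1 + 1 ⊗ₜ[ℂ] ι ξ)
    (ha : IsCocycleExtension act ι α a) (g h : H) :
    a (g * h) = ((D.rep g).map fun p => a p.1 * act p.2 (a h)).sum := by
  refine ((D.sum_rep_eq_lift ((LinearMap.mul ℂ A).compl₁₂ a (act.flip (a h))) g).trans
    (D.lift_comul_eq_of_recursion hgen hprim (fun ξ => LinearMap.mulLeft ℂ (α ξ) + act (ι ξ)) _
      ?_ (G := a ∘ₗ LinearMap.mulRight ℂ h) ?_ ?_ g)).symm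
  · intro ξ u v
    simp only [LinearMap.compl₁₂_apply, LinearMap.flip_apply, LinearMap.mul_apply_apply,
      LinearMap.add_apply, LinearMap.mulLeft_apply, ha.2, map_add, mul_assoc, hact.1,
      hact.map_mul_of_primitive (hprim ξ)]
    abel
  · simp [ha.1, hact.2.1]
  · intro ξ g
    simp [mul_assoc, ha.2]

theorem comm_act (hact : IsStarAction D act) (hgen : Algebra.adjoin ℂ (Set.range ι) = ⊤)
    (hprim : ∀ ξ, D.comul (ι ξ) = ι ξ ⊗ₜ[ℂ] 1 + 1 ⊗ₜ[ℂ] ι ξ) (hαc : ∀ ξ, IsCentral (α ξ))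
    (ha : IsCocycleExtension act ι α a) (g : H) (x : A) :
    ((D.rep g).map fun p => act p.1 x * a p.2).sum
      = ((D.rep g).map fun p => a p.1 * act p.2 x).sum := by
  let L := fun ξ => LinearMap.mulLeft ℂ (α ξ) + act (ι ξ)
  let f₁ := (LinearMap.mul ℂ A).compl₁₂ (act.flip x) a
  let f₂ := (LinearMap.mul ℂ A).compl₁₂ a (act.flip x)
  have hf₂ : ∀ ξ u v, f₂ (ι ξ * u) v + f₂ u (ι ξ * v) = L ξ (f₂ u v) := by
    intro ξ u v
    simp only [f₂, L, LinearMap.compl₁₂_apply, LinearMap.flip_apply, LinearMap.mul_apply_apply,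
      LinearMap.add_apply, LinearMap.mulLeft_apply, ha.2, map_add, mul_assoc, hact.1,
      hact.map_mul_of_primitive (hprim ξ)]
    abel
  refine (D.sum_rep_eq_lift f₁ g).trans ((D.lift_comul_eq_of_recursion hgen hprim L f₁ ?_
    (G := TensorProduct.lift f₂ ∘ₗ D.comul) ?_
    (fun ξ => D.lift_comul_mul_of_primitive (hprim ξ) f₂ (L ξ) (hf₂ ξ)) g).trans
    (D.sum_rep_eq_lift f₂ g).symm)
  · intro ξ u v
    have hc : α ξ * (act u x * a v) = act u x * (α ξ * a v) := by
      rw [← mul_assoc, hαc, mul_assoc]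
    simp only [f₁, L, LinearMap.compl₁₂_apply, LinearMap.flip_apply, LinearMap.mul_apply_apply,
      LinearMap.add_apply, LinearMap.mulLeft_apply, ha.2, mul_add, hc, hact.1,
      hact.map_mul_of_primitive (hprim ξ)]
    abel
  · simp [f₁, f₂, D.comul_one, Algebra.TensorProduct.one_def, ha.1, hact.2.1]

theorem unitary [StarModule ℂ H] (hact : IsStarAction D act)
    (hgen : Algebra.adjoin ℂ (Set.range ι) = ⊤)
    (hprim : ∀ ξ, D.comul (ι ξ) = ι ξ ⊗ₜ[ℂ] 1 + 1 ⊗ₜ[ℂ] ι ξ)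
    (hstar : ∀ ξ, star (ι ξ) = - ι ξ) (hS : ∀ ξ, D.antipode (ι ξ) = - ι ξ)
    (hcounit : ∀ ξ, D.counit (ι ξ) = 0)
    (hα : ∀ ξ, IsCentral (α ξ) ∧ star (α ξ) = - α ξ)
    (ha : IsCocycleExtension act ι α a) (g : H) :
    ((D.rep g).map fun p => a p.1 * star (a (D.antipode (star p.2)))).sum
      = D.counit g • 1 := by
  have := hact.starModule
  -- `b(g) = a(S(g*))*` obeys the recursion of the cocycle `-α`, so `a(g₍₁₎) b(g₍₂₎)` obeys that
  -- of the zero cocycle, `x ↦ ξ ▷ x`, as does `ε(g) • 1`.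
  let b' : H →ₗ⋆[ℂ] A := (starLinearEquiv ℂ (A := A)).toLinearMap ∘ₛₗ (a ∘ₗ D.antipode)
  let b : H →ₗ[ℂ] A := b' ∘ₛₗ (starLinearEquiv ℂ (A := H)).toLinearMap
  have hb : ∀ ξ v, b (ι ξ * v) = - (α ξ * b v) + act (ι ξ) (b v) := by
    intro ξ v
    change star (a (D.antipode (star _))) = -(α ξ * star (a (D.antipode (star v))))
      + act (ι ξ) (star (a (D.antipode (star v))))
    rw [star_mul, D.antipode_mul, hstar, map_neg, hS, neg_neg, ha.2, star_add, star_mul,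
      (hα ξ).2, hact.2.2.2.2, hS, star_neg, hstar, neg_neg, mul_neg, (hα ξ).1]
  let f := (LinearMap.mul ℂ A).compl₁₂ a b
  refine ((D.sum_rep_eq_lift f g).trans (D.lift_comul_eq_of_recursion hgen hprim
    (fun ξ => act (ι ξ)) f ?_ (G := convUnit D) ?_ ?_ g)).trans (Algebra.algebraMap_eq_smul_one _)
  · intro ξ u v
    have hc : a u * (α ξ * b v) = α ξ * a u * b v := by rw [← mul_assoc, (hα ξ).1]
    simp only [f, LinearMap.compl₁₂_apply, LinearMap.mul_apply_apply, LinearMap.add_apply,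
      ha.2, hb, map_add, mul_neg, hc, hact.map_mul_of_primitive (hprim ξ)]
    abel
  · simp [f, b, b', convUnit, ha.1, D.antipode_one, D.counit_one]
  · intro ξ h
    simp [convUnit, D.counit_mul, hcounit, Algebra.algebraMap_eq_smul_one,
      hact.map_one_of_counit_eq_zero (hcounit ξ)]

theorem isUElem [StarModule ℂ H] (hact : IsStarAction D act)
    (hgen : Algebra.adjoin ℂ (Set.range ι) = ⊤)
    (hprim : ∀ ξ, D.comul (ι ξ) = ι ξ ⊗ₜ[ℂ] 1 + 1 ⊗ₜ[ℂ] ι ξ)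
    (hstar : ∀ ξ, star (ι ξ) = - ι ξ) (hS : ∀ ξ, D.antipode (ι ξ) = - ι ξ)
    (hcounit : ∀ ξ, D.counit (ι ξ) = 0)
    (hα : ∀ ξ, IsCentral (α ξ) ∧ star (α ξ) = - α ξ)
    (ha : IsCocycleExtension act ι α a) : IsUElem D act a :=
  ⟨ha.1, ha.map_mul hact hgen hprim, ha.comm_act hact hgen hprim (fun ξ => (hα ξ).1),
    ha.unitary hact hgen hprim hstar hS hcounit hα⟩

end IsCocycleExtension

/-- for `H = U_ℂ(𝔤)` (characterized by its universal property and
generated by the primitive elements `ι ξ`), every Chevalley–Eilenberg one-cocycle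
`α ∈ Z¹_CE(𝔤, Z(A)_{anti-Herm})` arises as `a|_𝔤` for a (unique) `a ∈ U(U_ℂ(𝔤), A)`
(the inductively defined extension on tensor powers descends to `U_ℂ(𝔤)`); hence
restriction `a ↦ a|_𝔤` is a group isomorphism
`U(U_ℂ(𝔤), A) ≅ Z¹_CE(𝔤, Z(A)_{anti-Herm})`. -/
theorem restriction_is_isomorphism
    [Ring A] [Algebra ℂ A] [StarRing A]
    (D : HopfStarData H) (act : H →ₗ[ℂ] A →ₗ[ℂ] A) (hact : IsStarAction D act)
    (ι : 𝔤 → H)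
    (hadd : ∀ ξ η, ι (ξ + η) = ι ξ + ι η)
    (hsmul : ∀ (r : ℝ) ξ, ι (r • ξ) = (r : ℂ) • ι ξ)
    (hbr : ∀ ξ η, ι ⁅ξ, η⁆ = ι ξ * ι η - ι η * ι ξ)
    (hprim : ∀ ξ, D.comul (ι ξ) = ι ξ ⊗ₜ[ℂ] 1 + 1 ⊗ₜ[ℂ] ι ξ)
    (hstar : ∀ ξ, star (ι ξ) = - ι ξ)
    (hS : ∀ ξ, D.antipode (ι ξ) = - ι ξ)
    (hcounit : ∀ ξ, D.counit (ι ξ) = 0)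
    (hgen : Algebra.adjoin ℂ (Set.range ι) = ⊤)
    (huniv : ∀ (B : Type) [Ring B] [Algebra ℂ B] (f : 𝔤 → B),
      (∀ ξ η, f (ξ + η) = f ξ + f η) →
      (∀ (r : ℝ) ξ, f (r • ξ) = (r : ℂ) • f ξ) →
      (∀ ξ η, f ⁅ξ, η⁆ = f ξ * f η - f η * f ξ) →
      ∃! φ : H →ₐ[ℂ] B, ∀ ξ, φ (ι ξ) = f ξ) :
    (∀ α : 𝔤 → A,
      (∀ ξ η, α (ξ + η) = α ξ + α η) →
      (∀ (r : ℝ) ξ, α (r • ξ) = (r : ℂ) • α ξ) →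
      (∀ ξ, IsCentral (α ξ) ∧ star (α ξ) = - α ξ) →
      (∀ ξ η, α ⁅ξ, η⁆ = act (ι ξ) (α η) - act (ι η) (α ξ)) →
      ∃ a, IsUElem D act a ∧ ∀ ξ, a (ι ξ) = α ξ) ∧
    (∀ a b, IsUElem D act a → IsUElem D act b →
      ∀ ξ, conv D a b (ι ξ) = a (ι ξ) + b (ι ξ)) ∧
    (∀ a b, IsUElem D act a → IsUElem D act b →
      (∀ ξ, a (ι ξ) = b (ι ξ)) → a = b) := by
  refine ⟨fun α hαadd hαsmul hα hαbr => ?_, fun a b ha hb ξ => ?_, fun a b ha hb hab => ?_⟩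
  · obtain ⟨a, ha⟩ := exists_isCocycleExtension hact hadd hsmul hbr hprim huniv hαadd hαsmul
      (fun ξ => (hα ξ).1) hαbr
    have := D.starModule hgen hS
    exact ⟨a, ha.isUElem hact hgen hprim hstar hS hcounit hα, ha.apply_generator hact hcounit⟩
  · simp [conv, hprim, ha.1, hb.1]
  · refine (ha.isCocycleExtension hact hprim).ext hgen ?_
    simpa only [hab] using hb.isCocycleExtension hact hprim
end
end

section
/- For a unital algebra A, the assignment Φ ↦ [B_Φ], sending an automorphism Φ of A to the isomorphism class of the (A, A)-bimodule A with standard left action and right action a ·_Φ b = a·Φ(b), is a group homomorphism from Aut(A) to the Picard group Pic(A) whose kernel is exactly the group of inner automorphisms; i.e., the sequence 1 → InnAut(A) → Aut(A) → Pic(A) is exact. -/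
noncomputable section

/-- An isomorphism of the twisted `(A, A)`-bimodules `B_Φ` and `B_Ψ` (the bimodule
with underlying group `A`, standard left action and right action `x ·_Φ b = x Φ(b)`):
an additive bijection `f` that is left `A`-linear and intertwines the twisted right
actions. -/
def TwistIso (A : Type) [Ring A] (Φ Ψ : A ≃+* A) : Prop :=
  ∃ f : A ≃+ A, (∀ a x : A, f (a * x) = a * f x) ∧ (∀ x b : A, f (x * Φ b) = f x * Ψ b)

lemma twistIso_iff (A : Type) [Ring A] (Φ Ψ : A ≃+* A) :
    TwistIso A Φ Ψ ↔ ∃ u : Aˣ, ∀ a, Φ a = ↑u * Ψ a * ↑u⁻¹ := by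
  constructor
  · rintro ⟨f, hlin, htw⟩
    -- f x = x * f 1
    have hf : ∀ x : A, f x = x * f 1 := fun x => by
      simpa using hlin x 1
    -- find right inverse of f 1
    obtain ⟨v, hv⟩ : ∃ v, f v = 1 := ⟨f.symm 1, f.apply_symm_apply 1⟩
    have hv1 : v * f 1 = 1 := by rw [← hf]; exact hv
    have hv2 : f 1 * v = 1 := by
      have : f (f 1 * v) = f 1 := by
        rw [hf (f 1 * v), mul_assoc, hv1, mul_one, hf 1, one_mul]
      have := f.injective this
      simpa using this
    refine ⟨⟨f 1, v, hv2, hv1⟩, fun b => ?_⟩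
    have key : Φ b * f 1 = f 1 * Ψ b := by
      have := htw 1 b
      rw [one_mul, hf (Φ b)] at this
      exact this
    show Φ b = f 1 * Ψ b * v
    calc Φ b = Φ b * (f 1 * v) := by rw [hv2, mul_one]
      _ = (Φ b * f 1) * v := by rw [mul_assoc]
      _ = f 1 * Ψ b * v := by rw [key]
  · rintro ⟨u, hu⟩
    refine ⟨{ toFun := fun x => x * ↑u
              invFun := fun x => x * ↑u⁻¹
              left_inv := fun x => by simp [mul_assoc]
              right_inv := fun x => by simp [mul_assoc]
              map_add' := fun x y => add_mul x y _ }, fun a x => by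
                simp [mul_assoc], fun x b => ?_⟩
    simp only [AddEquiv.coe_mk, Equiv.coe_fn_mk]
    rw [hu b]
    simp [mul_assoc, u.inv_mul]

/-- for a unital algebra `A`, `Φ ↦ [B_Φ]` is a group homomorphism
`Aut(A) → Pic(A)` with kernel exactly the inner automorphisms: the classes satisfy
`[B_Φ] = [B_Ψ]` iff `Φ` and `Ψ` differ by an inner automorphism, and `[B_Φ]` is the
unit class `[A]` iff `Φ` is inner; i.e. `1 → InnAut(A) → Aut(A) → Pic(A)` is exact. -/
theorem aut_to_picard_exact (A : Type) [Ring A] :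
    (∀ Φ Ψ : A ≃+* A, TwistIso A Φ Ψ ↔ ∃ u : Aˣ, ∀ a, Φ a = ↑u * Ψ a * ↑u⁻¹) ∧
    (∀ Φ : A ≃+* A, TwistIso A Φ (RingEquiv.refl A) ↔ ∃ u : Aˣ, ∀ a, Φ a = ↑u * a * ↑u⁻¹) := by
  refine ⟨twistIso_iff A, fun Φ => ?_⟩
  simpa using twistIso_iff A Φ (RingEquiv.refl A)
end
end
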